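/- For all integers a₁, a₂, a₃, a₄ ≥ 2, one has a₄·W₄ − W₃ = a₂·W₂ − W₁ = a₁a₂a₃a₄ − a₁a₂a₄ − a₂a₃a₄ + a₁a₂ + a₃a₄ − a₂ − a₄ + 1, and this common value equals the Hirzebruch–Jung numerator |[2*(a₄−1), a₃, a₁, 2*(a₂−1)]|. -/

import Mathlib

/-- Hirzebruch–Jung numerator: |[]| = 1, |[n]| = n,
|[n₁, n₂, …]| = n₁·|[n₂, …]| − |[n₃, …]|. -/
def hj : List ℤ → ℤ
  | [] => 1
  | [n] => n
  | n :: m :: l => n * hj (m :: l) - hj l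

/-! The numerator `hj` is a continuant, so it splits along a concatenation like a product of the
matrices `!![n, -1; 1, 0]`. With this, a chain of `2`s contributes only through
`|[2*k]| = k + 1`, and the numerator of `[2*(a₄-1), a₃, a₁, 2*(a₂-1)]` is read off from those of
`[a₃, a₁]`, `[a₃]` and `[a₁]`. -/

theorem hj_cons (x : ℤ) : ∀ {l : List ℤ}, l ≠ [] → hj (x :: l) = x * hj l - hj l.tail
  | y :: l, _ => by rw [hj, List.tail_cons]

theorem hj_append : ∀ l₁ l₂ : List ℤ, l₁ ≠ [] → l₂ ≠ [] →
    hj (l₁ ++ l₂) = hj l₁ * hj l₂ - hj l₁.dropLast * hj l₂.tail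
  | [x], l₂, _, h₂ => by simp [hj_cons x h₂, hj]
  | [x, y], l₂, _, h₂ => by
    rw [List.cons_append, List.cons_append, List.nil_append, hj, hj_cons y h₂]
    simp only [hj, List.dropLast_cons_cons, List.dropLast_singleton]
    ring
  | x :: y :: z :: l, l₂, _, h₂ => by
    rw [List.cons_append, hj_cons x (by simp), hj_append (y :: z :: l) l₂ (by simp) h₂,
      List.cons_append, List.tail_cons, hj_append (z :: l) l₂ (by simp) h₂]
    simp only [List.dropLast_cons_cons, hj]
    ring

theorem hj_replicate_two : ∀ k : ℕ, hj (List.replicate k 2) = k + 1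
  | 0 => rfl
  | 1 => rfl
  | k + 2 => by
    rw [List.replicate_succ, List.replicate_succ, hj, ← List.replicate_succ,
      hj_replicate_two (k + 1), hj_replicate_two k]
    push_cast
    ring

theorem s_one_eq_hj_general (a₁ a₂ a₃ a₄ : ℤ) (h₂ : 2 ≤ a₂) (h₄ : 2 ≤ a₄) :
    a₄ * (a₁ * a₂ * a₃ - a₂ * a₃ + a₃ - 1) - (a₁ * a₂ * a₄ - a₁ * a₂ + a₂ - 1) =
        a₁ * a₂ * a₃ * a₄ - a₁ * a₂ * a₄ - a₂ * a₃ * a₄ + a₁ * a₂ + a₃ * a₄ - a₂ - a₄ + 1 ∧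
    a₂ * (a₁ * a₃ * a₄ - a₁ * a₄ + a₁ - 1) - (a₂ * a₃ * a₄ - a₃ * a₄ + a₄ - 1) =
        a₁ * a₂ * a₃ * a₄ - a₁ * a₂ * a₄ - a₂ * a₃ * a₄ + a₁ * a₂ + a₃ * a₄ - a₂ - a₄ + 1 ∧
    hj (List.replicate (a₄ - 1).toNat 2 ++ [a₃, a₁] ++ List.replicate (a₂ - 1).toNat 2) =
        a₁ * a₂ * a₃ * a₄ - a₁ * a₂ * a₄ - a₂ * a₃ * a₄ + a₁ * a₂ + a₃ * a₄ - a₂ - a₄ + 1 := by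
  refine ⟨by ring, by ring, ?_⟩
  obtain ⟨p, rfl⟩ : ∃ p : ℕ, a₄ = p + 2 := ⟨(a₄ - 2).toNat, by omega⟩
  obtain ⟨q, rfl⟩ : ∃ q : ℕ, a₂ = q + 2 := ⟨(a₂ - 2).toNat, by omega⟩
  rw [show ((p : ℤ) + 2 - 1).toNat = p + 1 by omega, show ((q : ℤ) + 2 - 1).toNat = q + 1 by omega,
    List.append_assoc, hj_append _ _ (by simp) (by simp), hj_append [a₃, a₁] _ (by simp) (by simp)]
  simp only [hj, hj_cons _ List.replicate_succ_ne_nil, hj_replicate_two, List.dropLast_replicate,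
    List.tail_replicate, List.cons_append, List.nil_append, List.tail_cons, List.dropLast_cons_cons, List.dropLast_singleton]
  push_cast
  ring

theorem s_one_eq_hj (a₁ a₂ a₃ a₄ : ℤ) (h₁ : 2 ≤ a₁) (h₂ : 2 ≤ a₂) (h₃ : 2 ≤ a₃) (h₄ : 2 ≤ a₄) :
    a₄ * (a₁ * a₂ * a₃ - a₂ * a₃ + a₃ - 1) - (a₁ * a₂ * a₄ - a₁ * a₂ + a₂ - 1) =
        a₁ * a₂ * a₃ * a₄ - a₁ * a₂ * a₄ - a₂ * a₃ * a₄ + a₁ * a₂ + a₃ * a₄ - a₂ - a₄ + 1 ∧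
    a₂ * (a₁ * a₃ * a₄ - a₁ * a₄ + a₁ - 1) - (a₂ * a₃ * a₄ - a₃ * a₄ + a₄ - 1) =
        a₁ * a₂ * a₃ * a₄ - a₁ * a₂ * a₄ - a₂ * a₃ * a₄ + a₁ * a₂ + a₃ * a₄ - a₂ - a₄ + 1 ∧
    hj (List.replicate (a₄ - 1).toNat 2 ++ [a₃, a₁] ++ List.replicate (a₂ - 1).toNat 2) =
        a₁ * a₂ * a₃ * a₄ - a₁ * a₂ * a₄ - a₂ * a₃ * a₄ + a₁ * a₂ + a₃ * a₄ - a₂ - a₄ + 1 :=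
  s_one_eq_hj_general a₁ a₂ a₃ a₄ h₂ h₄
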